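/- Let F0∈ℝ and ψ be smooth on {R>0}×ℝ_φ×ℝ_Z. Set B := ((1/R)∂_Zψ)e_R+(F0/R)e_φ+(−(1/R)∂_Rψ)e_Z, J := ∇×B, and j := Δ*ψ. Then e_φ·∇×(R²(J×B)) = [ψ,j] − (F0/R)∂_φ j. -/

import Mathlib

/-! With `j = Δ*ψ` and `u = ∂_φ ψ`, the current is `J = (∂_R u / R², -j / R, ∂_Z u / R²)`,
so `R² (J × B)` has components `F0 ∂_Z u / R - j ∂_R ψ` along `e_R` and
`-j ∂_Z ψ - F0 ∂_R u / R` along `e_Z`. In the `φ`-component of its curl the terms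
`j ∂_R ∂_Z ψ` cancel by symmetry of second derivatives, and the `F0` terms add up to
`-(F0 / R) Δ*u`, which is `-(F0 / R) ∂_φ j` because `Δ*` commutes with `∂_φ`. -/

noncomputable section
set_option linter.unusedVariables false

open Real

/-- Scalar fields on the cylindrical domain, as functions of `(R, φ, Z)`. -/
abbrev F3 := ℝ → ℝ → ℝ → ℝ

/-- Partial derivative in `R`. -/
def dR (f : F3) (R φ Z : ℝ) : ℝ := deriv (fun r => f r φ Z) R

/-- Partial derivative in `φ`. -/
def dP (f : F3) (R φ Z : ℝ) : ℝ := deriv (fun a => f R a Z) φ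

/-- Partial derivative in `Z`. -/
def dZ (f : F3) (R φ Z : ℝ) : ℝ := deriv (fun z => f R φ z) Z

/-- Joint smoothness (C^∞) of a scalar field. -/
def Smooth3 (f : F3) : Prop :=
  ContDiff ℝ (⊤ : ℕ∞) fun q : ℝ × ℝ × ℝ => f q.1 q.2.1 q.2.2

/-- Poisson bracket `[a,b] = ∂_R a ∂_Z b − ∂_Z a ∂_R b`. -/
def pb (a b : F3) (R φ Z : ℝ) : ℝ :=
  dR a R φ Z * dZ b R φ Z - dZ a R φ Z * dR b R φ Z

/-- Grad–Shafranov operator `Δ* f = R ∂_R((1/R) ∂_R f) + ∂_ZZ f`. -/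
def GS (f : F3) (R φ Z : ℝ) : ℝ :=
  R * dR (fun r a z => (1 / r) * dR f r a z) R φ Z + dZ (dZ f) R φ Z

/-- Poloidal Laplacian `Δ_pol f = (1/R) ∂_R(R ∂_R f) + ∂_ZZ f`. -/
def LapPol (f : F3) (R φ Z : ℝ) : ℝ :=
  (1 / R) * dR (fun r a z => r * dR f r a z) R φ Z + dZ (dZ f) R φ Z

/-- Cylindrical divergence `∇·F = (1/R)∂_R(R F_R) + (1/R)∂_φ F_φ + ∂_Z F_Z`. -/
def divC (FR Fφ FZ : F3) (R φ Z : ℝ) : ℝ :=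
  (1 / R) * dR (fun r a z => r * FR r a z) R φ Z + (1 / R) * dP Fφ R φ Z + dZ FZ R φ Z

/-- Scalar advection `X·∇f = X_R ∂_R f + (X_φ/R) ∂_φ f + X_Z ∂_Z f`. -/
def advS (XvR XvP XvZ f : F3) (R φ Z : ℝ) : ℝ :=
  XvR R φ Z * dR f R φ Z + XvP R φ Z / R * dP f R φ Z + XvZ R φ Z * dZ f R φ Z

/-- `e_R`-component of the vector advection `X·∇Y`. -/
def advVR (XvR XvP XvZ YvR YvP YvZ : F3) (R φ Z : ℝ) : ℝ :=
  advS XvR XvP XvZ YvR R φ Z - XvP R φ Z * YvP R φ Z / R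

/-- `e_φ`-component of the vector advection `X·∇Y`. -/
def advVP (XvR XvP XvZ YvR YvP YvZ : F3) (R φ Z : ℝ) : ℝ :=
  advS XvR XvP XvZ YvP R φ Z + XvP R φ Z * YvR R φ Z / R

/-- `e_Z`-component of the vector advection `X·∇Y`. -/
def advVZ (XvR XvP XvZ YvR YvP YvZ : F3) (R φ Z : ℝ) : ℝ :=
  advS XvR XvP XvZ YvZ R φ Z

/-- `e_R`-component of `B = (1/R)∇ψ×e_φ + (F0/R)e_φ`. -/
def BR (ψ : F3) : F3 := fun R φ Z => (1 / R) * dZ ψ R φ Z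

/-- `e_φ`-component of the magnetic field. -/
def BP (F0 : ℝ) : F3 := fun R _ _ => F0 / R

/-- `e_Z`-component of the magnetic field. -/
def BZ (ψ : F3) : F3 := fun R φ Z => -(1 / R) * dR ψ R φ Z

/-- `e_R`-component of `v_pol = −R∇u×e_φ`. -/
def vR (u : F3) : F3 := fun R φ Z => -R * dZ u R φ Z

/-- `e_Z`-component of `v_pol = −R∇u×e_φ`. -/
def vZ (u : F3) : F3 := fun R φ Z => R * dR u R φ Z

/-- The zero field. -/
def zeroF : F3 := fun _ _ _ => 0

/-- `|B|² = (F0² + (∂_Rψ)² + (∂_Zψ)²)/R²`. -/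
def B2 (F0 : ℝ) (ψ : F3) : F3 := fun R φ Z =>
  (F0 ^ 2 + (dR ψ R φ Z) ^ 2 + (dZ ψ R φ Z) ^ 2) / R ^ 2

/-- `|B_pol|² = ((∂_Rψ)² + (∂_Zψ)²)/R²`. -/
def Bpol2 (ψ : F3) : F3 := fun R φ Z => ((dR ψ R φ Z) ^ 2 + (dZ ψ R φ Z) ^ 2) / R ^ 2

/-- `ρ̂ = R²ρ`. -/
def rh (ρ : F3) : F3 := fun R φ Z => R ^ 2 * ρ R φ Z

/-- `∇_pol a · ∇_pol b`. -/
def gdot (a b : F3) : F3 := fun R φ Z =>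
  dR a R φ Z * dR b R φ Z + dZ a R φ Z * dZ b R φ Z

/-- `e_R`-component of `v∥ B`. -/
def XR (ψ vpar : F3) : F3 := fun R φ Z => vpar R φ Z * BR ψ R φ Z

/-- `e_φ`-component of `v∥ B`. -/
def XP (F0 : ℝ) (vpar : F3) : F3 := fun R φ Z => vpar R φ Z * BP F0 R φ Z

/-- `e_Z`-component of `v∥ B`. -/
def XZ (ψ vpar : F3) : F3 := fun R φ Z => vpar R φ Z * BZ ψ R φ Z

/-- `e_R`-component of `J = ∇×B` (left-handed frame). -/
def JR (F0 : ℝ) (ψ : F3) : F3 := fun R φ Z =>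
  dZ (BP F0) R φ Z - (1 / R) * dP (BZ ψ) R φ Z

/-- `e_φ`-component of `J = ∇×B`. -/
def JPc (ψ : F3) : F3 := fun R φ Z => dR (BZ ψ) R φ Z - dZ (BR ψ) R φ Z

/-- `e_Z`-component of `J = ∇×B`. -/
def JZc (F0 : ℝ) (ψ : F3) : F3 := fun R φ Z =>
  (1 / R) * dP (BR ψ) R φ Z - (1 / R) * dR (fun r a z => r * BP F0 r a z) R φ Z

/-- `e_R`-component of `J × B`. -/
def KR (F0 : ℝ) (ψ : F3) : F3 := fun R φ Z =>
  JZc F0 ψ R φ Z * BP F0 R φ Z - JPc ψ R φ Z * BZ ψ R φ Z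

/-- `e_Z`-component of `J × B`. -/
def KZ (F0 : ℝ) (ψ : F3) : F3 := fun R φ Z =>
  JPc ψ R φ Z * BR ψ R φ Z - JR F0 ψ R φ Z * BP F0 R φ Z

theorem fderiv_fderiv_apply_comm {E : Type*} [NormedAddCommGroup E] [NormedSpace ℝ E]
    {F : E → ℝ} (hF : ContDiff ℝ 2 F) (q v w : E) :
    fderiv ℝ (fun p => fderiv ℝ F p w) q v = fderiv ℝ (fun p => fderiv ℝ F p v) q w := by
  have hd : DifferentiableAt ℝ (fderiv ℝ F) q :=
    (hF.fderiv_right (m := 1) (by norm_num)).differentiable (by norm_num) q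
  simp only [fderiv_clm_apply hd (differentiableAt_const _), fderiv_fun_const, Pi.zero_apply,
    ContinuousLinearMap.comp_zero, zero_add, ContinuousLinearMap.flip_apply]
  exact (hF.contDiffAt.isSymmSndFDerivAt (by simp)) v w

def uncurry3 (f : F3) : ℝ × ℝ × ℝ → ℝ := fun q => f q.1 q.2.1 q.2.2

section Smooth3

variable {f : F3}

theorem Smooth3.differentiable (hf : Smooth3 f) : Differentiable ℝ (uncurry3 f) :=
  ContDiff.differentiable hf (by simp)

theorem Smooth3.hasDerivAt_fderiv_R (hf : Smooth3 f) (R φ Z : ℝ) :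
    HasDerivAt (fun r => f r φ Z) (fderiv ℝ (uncurry3 f) (R, φ, Z) (1, 0, 0)) R :=
  (hf.differentiable _).hasFDerivAt.comp_hasDerivAt R
    ((hasDerivAt_id R).prodMk ((hasDerivAt_const R φ).prodMk (hasDerivAt_const R Z)))

theorem Smooth3.hasDerivAt_fderiv_P (hf : Smooth3 f) (R φ Z : ℝ) :
    HasDerivAt (fun a => f R a Z) (fderiv ℝ (uncurry3 f) (R, φ, Z) (0, 1, 0)) φ :=
  (hf.differentiable _).hasFDerivAt.comp_hasDerivAt φ
    ((hasDerivAt_const φ R).prodMk ((hasDerivAt_id φ).prodMk (hasDerivAt_const φ Z)))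

theorem Smooth3.hasDerivAt_fderiv_Z (hf : Smooth3 f) (R φ Z : ℝ) :
    HasDerivAt (fun z => f R φ z) (fderiv ℝ (uncurry3 f) (R, φ, Z) (0, 0, 1)) Z :=
  (hf.differentiable _).hasFDerivAt.comp_hasDerivAt Z
    ((hasDerivAt_const Z R).prodMk ((hasDerivAt_const Z φ).prodMk (hasDerivAt_id Z)))

theorem Smooth3.uncurry3_dR (hf : Smooth3 f) :
    uncurry3 (dR f) = fun q => fderiv ℝ (uncurry3 f) q (1, 0, 0) :=
  funext fun q => (hf.hasDerivAt_fderiv_R q.1 q.2.1 q.2.2).deriv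

theorem Smooth3.uncurry3_dP (hf : Smooth3 f) :
    uncurry3 (dP f) = fun q => fderiv ℝ (uncurry3 f) q (0, 1, 0) :=
  funext fun q => (hf.hasDerivAt_fderiv_P q.1 q.2.1 q.2.2).deriv

theorem Smooth3.uncurry3_dZ (hf : Smooth3 f) :
    uncurry3 (dZ f) = fun q => fderiv ℝ (uncurry3 f) q (0, 0, 1) :=
  funext fun q => (hf.hasDerivAt_fderiv_Z q.1 q.2.1 q.2.2).deriv

theorem Smooth3.contDiff_fderiv_apply (hf : Smooth3 f) (v : ℝ × ℝ × ℝ) :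
    ContDiff ℝ (⊤ : ℕ∞) fun q => fderiv ℝ (uncurry3 f) q v :=
  (ContDiff.fderiv_right hf (by norm_cast)).clm_apply contDiff_const

theorem smooth3_dR (hf : Smooth3 f) : Smooth3 (dR f) := by
  show ContDiff ℝ (⊤ : ℕ∞) (uncurry3 (dR f))
  exact hf.uncurry3_dR ▸ hf.contDiff_fderiv_apply _

theorem smooth3_dP (hf : Smooth3 f) : Smooth3 (dP f) := by
  show ContDiff ℝ (⊤ : ℕ∞) (uncurry3 (dP f))
  exact hf.uncurry3_dP ▸ hf.contDiff_fderiv_apply _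

theorem smooth3_dZ (hf : Smooth3 f) : Smooth3 (dZ f) := by
  show ContDiff ℝ (⊤ : ℕ∞) (uncurry3 (dZ f))
  exact hf.uncurry3_dZ ▸ hf.contDiff_fderiv_apply _

theorem Smooth3.hasDerivAt_R (hf : Smooth3 f) (R φ Z : ℝ) :
    HasDerivAt (fun r => f r φ Z) (dR f R φ Z) R :=
  (hf.hasDerivAt_fderiv_R R φ Z).differentiableAt.hasDerivAt

theorem Smooth3.hasDerivAt_P (hf : Smooth3 f) (R φ Z : ℝ) :
    HasDerivAt (fun a => f R a Z) (dP f R φ Z) φ :=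
  (hf.hasDerivAt_fderiv_P R φ Z).differentiableAt.hasDerivAt

theorem Smooth3.hasDerivAt_Z (hf : Smooth3 f) (R φ Z : ℝ) :
    HasDerivAt (fun z => f R φ z) (dZ f R φ Z) Z :=
  (hf.hasDerivAt_fderiv_Z R φ Z).differentiableAt.hasDerivAt

theorem Smooth3.fderiv_comm (hf : Smooth3 f) (q v w : ℝ × ℝ × ℝ) :
    fderiv ℝ (fun p => fderiv ℝ (uncurry3 f) p w) q v =
      fderiv ℝ (fun p => fderiv ℝ (uncurry3 f) p v) q w :=
  fderiv_fderiv_apply_comm (ContDiff.of_le hf (by norm_cast)) q v w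

theorem Smooth3.dR_dZ (hf : Smooth3 f) : dR (dZ f) = dZ (dR f) := by
  funext R φ Z
  refine ((smooth3_dZ hf).hasDerivAt_fderiv_R R φ Z).deriv.trans
    (Eq.trans ?_ ((smooth3_dR hf).hasDerivAt_fderiv_Z R φ Z).deriv.symm)
  rw [hf.uncurry3_dZ, hf.uncurry3_dR]
  exact hf.fderiv_comm _ _ _

theorem Smooth3.dP_dR (hf : Smooth3 f) : dP (dR f) = dR (dP f) := by
  funext R φ Z
  refine ((smooth3_dR hf).hasDerivAt_fderiv_P R φ Z).deriv.trans
    (Eq.trans ?_ ((smooth3_dP hf).hasDerivAt_fderiv_R R φ Z).deriv.symm)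
  rw [hf.uncurry3_dR, hf.uncurry3_dP]
  exact hf.fderiv_comm _ _ _

theorem Smooth3.dP_dZ (hf : Smooth3 f) : dP (dZ f) = dZ (dP f) := by
  funext R φ Z
  refine ((smooth3_dZ hf).hasDerivAt_fderiv_P R φ Z).deriv.trans
    (Eq.trans ?_ ((smooth3_dP hf).hasDerivAt_fderiv_Z R φ Z).deriv.symm)
  rw [hf.uncurry3_dZ, hf.uncurry3_dP]
  exact hf.fderiv_comm _ _ _

end Smooth3

section GradShafranov

variable {f : F3} {R : ℝ}

theorem Smooth3.hasDerivAt_div_R (hf : Smooth3 f) (hR : R ≠ 0) (φ Z : ℝ) :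
    HasDerivAt (fun r => f r φ Z / r) ((dR f R φ Z * R - f R φ Z) / R ^ 2) R := by
  simpa using (hf.hasDerivAt_R R φ Z).fun_div (hasDerivAt_id' R) hR

theorem GS_eq (hf : Smooth3 f) (hR : R ≠ 0) (φ Z : ℝ) :
    GS f R φ Z = dR (dR f) R φ Z - dR f R φ Z / R + dZ (dZ f) R φ Z := by
  show R * deriv (fun r => 1 / r * dR f r φ Z) R + _ = _
  simp_rw [one_div_mul_eq_div]
  rw [((smooth3_dR hf).hasDerivAt_div_R hR φ Z).deriv]
  field_simp

theorem differentiableAt_GS_R (hf : Smooth3 f) (hR : R ≠ 0) (φ Z : ℝ) :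
    DifferentiableAt ℝ (fun r => GS f r φ Z) R := by
  have hd := (((smooth3_dR (smooth3_dR hf)).hasDerivAt_R R φ Z).sub
    ((smooth3_dR hf).hasDerivAt_div_R hR φ Z)).add
    ((smooth3_dZ (smooth3_dZ hf)).hasDerivAt_R R φ Z)
  refine hd.differentiableAt.congr_of_eventuallyEq ?_
  filter_upwards [eventually_ne_nhds hR] with r hr using GS_eq hf hr φ Z

theorem differentiableAt_GS_Z (hf : Smooth3 f) (hR : R ≠ 0) (φ Z : ℝ) :
    DifferentiableAt ℝ (fun z => GS f R φ z) Z := by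
  have hd := (((smooth3_dR (smooth3_dR hf)).hasDerivAt_Z R φ Z).sub
    (((smooth3_dR hf).hasDerivAt_Z R φ Z).div_const R)).add
    ((smooth3_dZ (smooth3_dZ hf)).hasDerivAt_Z R φ Z)
  rw [funext fun z => GS_eq hf hR φ z]
  exact hd.differentiableAt

theorem dP_GS (hf : Smooth3 f) (hR : R ≠ 0) (φ Z : ℝ) :
    dP (GS f) R φ Z = GS (dP f) R φ Z := by
  have hd := (((smooth3_dR (smooth3_dR hf)).hasDerivAt_P R φ Z).fun_sub
    (((smooth3_dR hf).hasDerivAt_P R φ Z).div_const R)).fun_add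
    ((smooth3_dZ (smooth3_dZ hf)).hasDerivAt_P R φ Z)
  show deriv (fun a => GS f R a Z) φ = _
  rw [funext fun a => GS_eq hf hR a Z, hd.deriv, GS_eq (smooth3_dP hf) hR,
    (smooth3_dR hf).dP_dR, hf.dP_dR, (smooth3_dZ hf).dP_dZ, hf.dP_dZ]

end GradShafranov

section Current

variable {ψ : F3} {R : ℝ}

theorem JPc_eq (hψ : Smooth3 ψ) (hR : R ≠ 0) (φ Z : ℝ) :
    JPc ψ R φ Z = -GS ψ R φ Z / R := by
  show deriv (fun r => -(1 / r) * dR ψ r φ Z) R - deriv (fun z => 1 / R * dZ ψ R φ z) Z = _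
  simp_rw [neg_mul, one_div_mul_eq_div]
  rw [((smooth3_dR hψ).hasDerivAt_div_R hR φ Z).fun_neg.deriv,
    (((smooth3_dZ hψ).hasDerivAt_Z R φ Z).div_const R).deriv, GS_eq hψ hR]
  field_simp
  ring

theorem JR_eq (F0 : ℝ) (hψ : Smooth3 ψ) (R φ Z : ℝ) :
    JR F0 ψ R φ Z = dR (dP ψ) R φ Z / R ^ 2 := by
  show deriv (fun _ => F0 / R) Z - 1 / R * deriv (fun a => -(1 / R) * dR ψ R a Z) φ = _
  rw [deriv_const, (((smooth3_dR hψ).hasDerivAt_P R φ Z).const_mul _).deriv, hψ.dP_dR]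
  ring

theorem JZc_eq (F0 : ℝ) (hψ : Smooth3 ψ) (hR : R ≠ 0) (φ Z : ℝ) :
    JZc F0 ψ R φ Z = dZ (dP ψ) R φ Z / R ^ 2 := by
  have hF0 : deriv (fun r => r * (F0 / r)) R = 0 := by
    rw [Filter.EventuallyEq.deriv_eq (f := fun _ => F0), deriv_const]
    filter_upwards [eventually_ne_nhds hR] with r hr using by field_simp
  show 1 / R * deriv (fun a => 1 / R * dZ ψ R a Z) φ - 1 / R * deriv (fun r => r * (F0 / r)) R = _
  rw [hF0, (((smooth3_dZ hψ).hasDerivAt_P R φ Z).const_mul _).deriv, hψ.dP_dZ]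
  ring

end Current

section LorentzForce

variable {ψ : F3} {R : ℝ}

theorem sq_mul_KZ_eq (F0 : ℝ) (hψ : Smooth3 ψ) (hR : R ≠ 0) (φ Z : ℝ) :
    R ^ 2 * KZ F0 ψ R φ Z = -(GS ψ R φ Z * dZ ψ R φ Z) - F0 * (dR (dP ψ) R φ Z / R) := by
  show R ^ 2 * (JPc ψ R φ Z * (1 / R * dZ ψ R φ Z) - JR F0 ψ R φ Z * (F0 / R)) = _
  rw [JPc_eq hψ hR, JR_eq F0 hψ]
  field_simp

theorem sq_mul_KR_eq (F0 : ℝ) (hψ : Smooth3 ψ) (hR : R ≠ 0) (φ Z : ℝ) :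
    R ^ 2 * KR F0 ψ R φ Z = F0 * (dZ (dP ψ) R φ Z / R) - GS ψ R φ Z * dR ψ R φ Z := by
  show R ^ 2 * (JZc F0 ψ R φ Z * (F0 / R) - JPc ψ R φ Z * (-(1 / R) * dR ψ R φ Z)) = _
  rw [JPc_eq hψ hR, JZc_eq F0 hψ hR]
  field_simp

theorem dR_sq_mul_KZ (F0 : ℝ) (hψ : Smooth3 ψ) (hR : R ≠ 0) (φ Z : ℝ) :
    dR (fun r a z => r ^ 2 * KZ F0 ψ r a z) R φ Z =
      -(dR (GS ψ) R φ Z * dZ ψ R φ Z + GS ψ R φ Z * dR (dZ ψ) R φ Z)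
        - F0 * ((dR (dR (dP ψ)) R φ Z * R - dR (dP ψ) R φ Z) / R ^ 2) := by
  have hd := (((differentiableAt_GS_R hψ hR φ Z).hasDerivAt.fun_mul
    ((smooth3_dZ hψ).hasDerivAt_R R φ Z)).fun_neg.fun_sub
    (((smooth3_dR (smooth3_dP hψ)).hasDerivAt_div_R hR φ Z).const_mul F0))
  refine Filter.EventuallyEq.deriv_eq ?_ |>.trans hd.deriv
  filter_upwards [eventually_ne_nhds hR] with r hr using sq_mul_KZ_eq F0 hψ hr φ Z

theorem dZ_sq_mul_KR (F0 : ℝ) (hψ : Smooth3 ψ) (hR : R ≠ 0) (φ Z : ℝ) :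
    dZ (fun r a z => r ^ 2 * KR F0 ψ r a z) R φ Z =
      F0 * (dZ (dZ (dP ψ)) R φ Z / R)
        - (dZ (GS ψ) R φ Z * dR ψ R φ Z + GS ψ R φ Z * dZ (dR ψ) R φ Z) := by
  have hd := ((((smooth3_dZ (smooth3_dP hψ)).hasDerivAt_Z R φ Z).div_const R).const_mul
    F0).fun_sub ((differentiableAt_GS_Z hψ hR φ Z).hasDerivAt.fun_mul
      ((smooth3_dR hψ).hasDerivAt_Z R φ Z))
  show deriv (fun z => R ^ 2 * KR F0 ψ R φ z) Z = _
  rw [funext fun z => sq_mul_KR_eq F0 hψ hR φ z]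
  exact hd.deriv

end LorentzForce

/-- `e_φ·∇×(R²(J×B)) = [ψ,j] − (F0/R)∂_φ j` with `j = Δ*ψ`. -/
theorem curl_phi_of_lorentz_force (F0 : ℝ) (ψ : F3) (hψ : Smooth3 ψ) :
    ∀ R φ Z : ℝ, 0 < R →
      dR (fun r a z => r ^ 2 * KZ F0 ψ r a z) R φ Z
        - dZ (fun r a z => r ^ 2 * KR F0 ψ r a z) R φ Z
      = pb ψ (GS ψ) R φ Z - (F0 / R) * dP (GS ψ) R φ Z := by
  intro R φ Z hR
  rw [dR_sq_mul_KZ F0 hψ hR.ne', dZ_sq_mul_KR F0 hψ hR.ne', pb, dP_GS hψ hR.ne',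
    GS_eq (smooth3_dP hψ) hR.ne', hψ.dR_dZ]
  field_simp
  ring
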